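/- arXiv:1012.5028 — 3 statements merged into one kernel-verified Lean document; each statement's English description precedes it below -/
import Mathlib

section
/- Let f : ℝ → ℝ be a Lipschitz (or C¹) function that is 4π-periodic and anti-2π-periodic, i.e. f(θ + 2π) = -f(θ) for all θ. Then ∫₀^{4π} (f'(θ))² dθ ≥ (1/4) ∫₀^{4π} f(θ)² dθ. -/
open Real intervalIntegral

/-!
Antiperiodicity makes `f` periodic of period `4π` with mean zero over a period, so the
zeroth Fourier coefficient of `f` on `[0, 4π]` vanishes. For `n ≠ 0`, integration by parts
(the boundary terms cancel by periodicity) shows that the `n`-th coefficient of `f'` is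
`i n / 2` times that of `f`, and `|n / 2|² ≥ 1 / 4`. Summing over `n` by Parseval's identity
gives the inequality; in general this is Wirtinger's inequality with constant `(2π / (b - a))²`.
-/

open MeasureTheory Set Complex Interval

theorem ContinuousOn.memLp_restrict_Ioc {E : Type*} [NormedAddCommGroup E] {g : ℝ → E}
    {a b : ℝ} (hg : ContinuousOn g (Icc a b)) (p : ENNReal) :
    MemLp g p (volume.restrict (Ioc a b)) := by
  obtain ⟨C, hC⟩ := isCompact_Icc.exists_bound_of_continuousOn hg
  refine MemLp.of_bound ((hg.mono Ioc_subset_Icc_self).aestronglyMeasurable measurableSet_Ioc) C ?_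
  filter_upwards [ae_restrict_mem measurableSet_Ioc] with x hx using hC x (Ioc_subset_Icc_self hx)

theorem fourierCoeffOn_zero {E : Type*} [NormedAddCommGroup E] [NormedSpace ℂ E]
    {a b : ℝ} (hab : a < b) (f : ℝ → E) :
    fourierCoeffOn hab f 0 = (1 / (b - a)) • ∫ x in a..b, f x := by
  simp [fourierCoeffOn_eq_integral]

theorem fourierCoeffOn_of_hasDerivAt_of_eq {a b : ℝ} (hab : a < b) {f f' : ℝ → ℂ} {n : ℤ}
    (hn : n ≠ 0) (hf : ∀ x ∈ [[a, b]], HasDerivAt f (f' x) x)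
    (hf' : IntervalIntegrable f' volume a b) (hfab : f a = f b) :
    fourierCoeffOn hab f' n = 2 * π * I * n / (b - a) * fourierCoeffOn hab f n := by
  have hba : (b : ℂ) - a ≠ 0 := by exact_mod_cast (sub_pos.2 hab).ne'
  have hn' : (n : ℂ) ≠ 0 := by exact_mod_cast hn
  rw [fourierCoeffOn_of_hasDerivAt hab hn hf hf', hfab, sub_self, mul_zero, zero_sub]
  field_simp

theorem Function.Antiperiodic.intervalIntegral_add_two_mul_eq_zero {E : Type*}
    [NormedAddCommGroup E] [NormedSpace ℝ E] {f : ℝ → E} {c : ℝ}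
    (hf : Function.Antiperiodic f c) (hint : ∀ x y, IntervalIntegrable f volume x y) (a : ℝ) :
    ∫ x in a..a + 2 * c, f x = 0 := by
  have hshift : ∫ x in a + c..a + 2 * c, f x = -∫ x in a..a + c, f x :=
    calc ∫ x in a + c..a + 2 * c, f x = ∫ x in a..a + c, f (x + c) := by
          rw [integral_comp_add_right]; ring_nf
      _ = -∫ x in a..a + c, f x := by simp only [hf _, intervalIntegral.integral_neg]
  rw [← integral_add_adjacent_intervals (hint a (a + c)) (hint (a + c) (a + 2 * c)), hshift,
    add_neg_cancel]

theorem wirtinger_inequality {a b : ℝ} (hab : a < b) {f f' : ℝ → ℂ}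
    (hf : ∀ x ∈ [[a, b]], HasDerivAt f (f' x) x) (hf' : MemLp f' 2 (volume.restrict (Ioc a b)))
    (hfab : f a = f b) (hmean : ∫ x in a..b, f x = 0) :
    (2 * π / (b - a)) ^ 2 * ∫ x in a..b, ‖f x‖ ^ 2 ≤ ∫ x in a..b, ‖f' x‖ ^ 2 := by
  have hba : 0 < b - a := sub_pos.2 hab
  have hfc : ContinuousOn f (Icc a b) := fun x hx =>
    (hf x (Icc_subset_uIcc hx)).continuousAt.continuousWithinAt
  have hf'int : IntervalIntegrable f' volume a b :=
    (intervalIntegrable_iff_integrableOn_Ioc_of_le hab.le).2 (hf'.integrable one_le_two)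
  have hterm : ∀ n : ℤ, (2 * π / (b - a)) ^ 2 * ‖fourierCoeffOn hab f n‖ ^ 2
      ≤ ‖fourierCoeffOn hab f' n‖ ^ 2 := by
    intro n
    rcases eq_or_ne n 0 with rfl | hn
    · rw [fourierCoeffOn_zero, hmean, smul_zero, norm_zero]
      simp
    · have hn1 : (1 : ℝ) ≤ |(n : ℝ)| := by exact_mod_cast Int.one_le_abs hn
      have hnorm : ‖2 * π * I * n / (b - a)‖ = 2 * π / (b - a) * |(n : ℝ)| := by
        have hba' : ‖(b : ℂ) - a‖ = b - a := by
          rw [← ofReal_sub, norm_real, Real.norm_of_nonneg hba.le]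
        simp [Complex.norm_intCast, abs_of_pos pi_pos, hba']
        ring
      rw [fourierCoeffOn_of_hasDerivAt_of_eq hab hn hf hf'int hfab, norm_mul, mul_pow, hnorm]
      gcongr
      nlinarith [div_pos two_pi_pos hba]
  have hsum := hasSum_le hterm
    ((hasSum_sq_fourierCoeffOn hab (hfc.memLp_restrict_Ioc 2)).mul_left _)
    (hasSum_sq_fourierCoeffOn hab hf')
  rw [smul_eq_mul, smul_eq_mul, mul_left_comm] at hsum
  exact le_of_mul_le_mul_left hsum (inv_pos.2 hba)

/-- Anti-periodic Wirtinger inequality: if `f` is `C¹` with `f (θ + 2π) = -f θ`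
(hence `4π`-periodic), then `∫₀^{4π} f'² ≥ (1/4) ∫₀^{4π} f²`. -/
theorem antiperiodic_wirtinger (f : ℝ → ℝ) (hf : ContDiff ℝ 1 f)
    (hanti : ∀ θ : ℝ, f (θ + 2 * π) = - f θ) :
    (1 / 4) * ∫ θ in (0:ℝ)..(4 * π), (f θ) ^ 2 ≤ ∫ θ in (0:ℝ)..(4 * π), (deriv f θ) ^ 2 := by
  have h4π : 4 * π = 2 * (2 * π) := by ring
  have hderiv : ∀ x ∈ [[0, 4 * π]], HasDerivAt (fun x => (f x : ℂ)) ((deriv f x : ℝ) : ℂ) x :=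
    fun x _ => ((hf.differentiable one_ne_zero x).hasDerivAt).ofReal_comp
  have hL2 : MemLp (fun x => ((deriv f x : ℝ) : ℂ)) 2 (volume.restrict (Ioc 0 (4 * π))) :=
    (continuous_ofReal.comp (hf.continuous_deriv le_rfl)).continuousOn.memLp_restrict_Ioc 2
  have hperiod : (f 0 : ℂ) = f (4 * π) := by
    rw [h4π, (Function.Antiperiodic.periodic_two_mul hanti).eq]
  have hmean : ∫ x in (0:ℝ)..4 * π, (f x : ℂ) = 0 := by
    rw [intervalIntegral.integral_ofReal, h4π, ← zero_add (2 * (2 * π)),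
      Function.Antiperiodic.intervalIntegral_add_two_mul_eq_zero hanti
        (hf.continuous.intervalIntegrable · ·), ofReal_zero]
  have hconst : (2 * π / (4 * π - 0)) ^ 2 = 1 / 4 := by
    field_simp
    ring
  simpa only [hconst, norm_real, Real.norm_eq_abs, sq_abs] using
    wirtinger_inequality (by positivity) hderiv hL2 hperiod hmean
end

section
/- Suppose φ : ℝⁿ → ℝ is continuous and satisfies both homogeneity conditions φ(λx) = λ^β φ(x) and φ(λx + z) = λ^β φ(x + z) for all λ > 0 and all x ∈ ℝⁿ, where z ∈ ℝⁿ is fixed and β > 0. Then φ is invariant under translation by z: φ(x + tz) = φ(x) for all x ∈ ℝⁿ and t ∈ ℝ. -/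
/-!
Write `t = l⁻¹ - l` with `l > 0`. The translation `x ↦ x + t • z` is the dilation by `l²` about `z`
conjugated by the dilation by `l⁻¹` about `0`, so by the two homogeneity laws `φ` changes along it
by the factor `(l⁻¹) ^ β * (l ^ 2) ^ β * (l⁻¹) ^ β = 1`.
-/

open Real

theorem exists_pos_inv_sub_eq (t : ℝ) : ∃ l : ℝ, 0 < l ∧ l⁻¹ - l = t := by
  set s := √(t ^ 2 + 4)
  have hs : s ^ 2 = t ^ 2 + 4 := sq_sqrt (by positivity)
  have hts : t < s := by nlinarith [sqrt_nonneg (t ^ 2 + 4)]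
  -- the positive root of `l ^ 2 + t * l - 1`
  refine ⟨(s - t) / 2, by linarith, ?_⟩
  have hst : s - t ≠ 0 := by linarith
  field_simp
  linear_combination -hs

section Dilation

variable {E F : Type*} [AddCommGroup E] [Module ℝ E] [AddCommGroup F] [Module ℝ F]
  {φ : E → F} {β : ℝ} {z : E}

theorem map_smul_add_one_sub_smul_of_homogeneous_about
    (h : ∀ l : ℝ, 0 < l → ∀ x, φ (l • x + z) = l ^ β • φ (x + z)) {l : ℝ} (hl : 0 < l) (y : E) :
    φ (l • y + (1 - l) • z) = l ^ β • φ y := by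
  have hy : l • y + (1 - l) • z = l • (y - z) + z := by module
  rw [hy, h l hl, sub_add_cancel]

theorem map_add_inv_sub_smul_of_homogeneous_two_centers
    (h₀ : ∀ l : ℝ, 0 < l → ∀ x, φ (l • x) = l ^ β • φ x)
    (hz : ∀ l : ℝ, 0 < l → ∀ x, φ (l • x + z) = l ^ β • φ (x + z)) {l : ℝ} (hl : 0 < l) (x : E) :
    φ (x + (l⁻¹ - l) • z) = φ x := by
  have hconj : x + (l⁻¹ - l) • z = l⁻¹ • ((l ^ 2) • (l⁻¹ • x) + (1 - l ^ 2) • z) := by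
    match_scalars <;> field_simp
  have hfactor : l⁻¹ ^ β * (l ^ 2) ^ β * l⁻¹ ^ β = 1 := by
    rw [← mul_rpow (by positivity) (by positivity), ← mul_rpow (by positivity) (by positivity)]
    field_simp
    exact one_rpow β
  rw [hconj, h₀ _ (inv_pos.2 hl), map_smul_add_one_sub_smul_of_homogeneous_about hz (by positivity),
    h₀ _ (inv_pos.2 hl), smul_smul, smul_smul, hfactor, one_smul]

end Dilation

theorem homogeneous_two_centers_translation_invariant_general {n : ℕ}
    (φ : EuclideanSpace ℝ (Fin n) → ℝ)
    (z : EuclideanSpace ℝ (Fin n)) (β : ℝ)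
    (h1 : ∀ l : ℝ, 0 < l → ∀ x, φ (l • x) = l ^ β * φ x)
    (h2 : ∀ l : ℝ, 0 < l → ∀ x, φ (l • x + z) = l ^ β * φ (x + z)) :
    ∀ (x : EuclideanSpace ℝ (Fin n)) (t : ℝ), φ (x + t • z) = φ x := by
  intro x t
  obtain ⟨l, hl, rfl⟩ := exists_pos_inv_sub_eq t
  exact map_add_inv_sub_smul_of_homogeneous_two_centers h1 h2 hl x

/-- If a continuous `φ : ℝⁿ → ℝ` is homogeneous of degree `β > 0` about both `0` and
about the center `z` (i.e. `φ(λx) = λ^β φ(x)` and `φ(λx + z) = λ^β φ(x + z)` for all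
`λ > 0`), then `φ` is invariant under all translations by multiples of `z`. -/
theorem homogeneous_two_centers_translation_invariant {n : ℕ}
    (φ : EuclideanSpace ℝ (Fin n) → ℝ) (hφ : Continuous φ)
    (z : EuclideanSpace ℝ (Fin n)) (β : ℝ) (hβ : 0 < β)
    (h1 : ∀ l : ℝ, 0 < l → ∀ x, φ (l • x) = l ^ β * φ x)
    (h2 : ∀ l : ℝ, 0 < l → ∀ x, φ (l • x + z) = l ^ β * φ (x + z)) :
    ∀ (x : EuclideanSpace ℝ (Fin n)) (t : ℝ), φ (x + t • z) = φ x :=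
  homogeneous_two_centers_translation_invariant_general φ z β h1 h2
end

section
/- Let w : B₁ → ℝ^k be C¹ with w(0) = 0, satisfying the gradient bound sup_{B_ρ} |Dw| ≤ K (ρ^{-2-n} ∫_{B_ρ} |w|²)^{1/2} for all ρ < ρ₀. Then there is a constant C = C(n, k, K) such that ∫_{B_ρ} |w|² ≤ C ρ² ∫_{B_ρ} |Dw|² for all ρ < ρ₀. -/
/-!
For `x ∈ B_ρ`, `w x = ∫₀¹ Dw(t x) x dt`, so `∫_{B_ρ} |w|² ≤ ρ² ∫₀¹ ∫_{B_ρ} |Dw(t x)|² dx dt`.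
For `t > ε` the inner integral equals `t⁻ⁿ ∫_{B_{tρ}} |Dw|² ≤ ε⁻ⁿ ∫_{B_ρ} |Dw|²`. For `t ≤ ε` it is
at most `|B_ρ| sup_{B_ρ} |Dw|²`, and the gradient hypothesis turns the resulting term into
`ε K² |B_1| ∫_{B_ρ} |w|²`, which is absorbed into the left-hand side once `ε K² |B_1| ≤ 1/2`.
-/

open Real Set Metric MeasureTheory ProbabilityTheory Module

theorem sq_integral_le_integral_sq {Ω : Type*} [MeasurableSpace Ω] {μ : Measure Ω}
    [IsProbabilityMeasure μ] {f : Ω → ℝ} (hf : MemLp f 2 μ) :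
    (∫ x, f x ∂μ) ^ 2 ≤ ∫ x, f x ^ 2 ∂μ := by
  have h := variance_nonneg f μ
  rw [variance_eq_sub hf] at h
  simpa using h

section Radial

variable {E F : Type*} [NormedAddCommGroup E] [NormedSpace ℝ E]
  [NormedAddCommGroup F] [NormedSpace ℝ F] [CompleteSpace F]

theorem norm_sub_sq_le_integral_norm_fderiv_smul_sq {w : E → F} {s : Set E} {x : E}
    (hw : ContDiffOn ℝ 1 w s) (hs : IsOpen s) (hx : ∀ t ∈ Icc (0:ℝ) 1, t • x ∈ s) :
    ‖w x - w 0‖ ^ 2 ≤ ‖x‖ ^ 2 * ∫ t in Ioc (0:ℝ) 1, ‖fderiv ℝ w (t • x)‖ ^ 2 := by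
  have hD : ContinuousOn (fun t : ℝ => fderiv ℝ w (t • x)) (Icc 0 1) :=
    (hw.continuousOn_fderiv_of_isOpen hs le_rfl).comp (by fun_prop) hx
  have hderiv : ∀ t ∈ uIcc (0:ℝ) 1,
      HasDerivAt (fun s : ℝ => w (s • x)) (fderiv ℝ w (t • x) x) t := by
    intro t ht
    rw [uIcc_of_le zero_le_one] at ht
    have hwt := ((hw.differentiableOn one_ne_zero).differentiableAt
      (hs.mem_nhds (hx t ht))).hasFDerivAt
    exact hwt.comp_hasDerivAt t (by simpa using (hasDerivAt_id t).smul_const x)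
  have hFTC : w x - w 0 = ∫ t in (0:ℝ)..1, fderiv ℝ w (t • x) x := by
    rw [intervalIntegral.integral_eq_sub_of_hasDerivAt hderiv
      ((hD.clm_apply continuousOn_const).intervalIntegrable_of_Icc zero_le_one)]
    simp
  have : IsProbabilityMeasure (volume.restrict (Ioc (0:ℝ) 1)) := ⟨by simp⟩
  have hL2 : MemLp (fun t : ℝ => ‖fderiv ℝ w (t • x)‖) 2 (volume.restrict (Ioc (0:ℝ) 1)) := by
    have hIoc :=
      Measure.restrict_mono (Ioc_subset_Icc_self (a := (0:ℝ)) (b := 1)) (le_refl volume)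
    refine (memLp_two_iff_integrable_sq ?_).2 ?_
    · exact (hD.norm.aestronglyMeasurable measurableSet_Icc).mono_measure hIoc
    · exact (hD.norm.pow 2).integrableOn_Icc.mono_set Ioc_subset_Icc_self
  calc ‖w x - w 0‖ ^ 2 ≤ (∫ t in Ioc (0:ℝ) 1, ‖fderiv ℝ w (t • x)‖ * ‖x‖) ^ 2 := by
        gcongr
        rw [hFTC, intervalIntegral.integral_of_le zero_le_one]
        refine norm_integral_le_of_norm_le (hL2.integrable one_le_two |>.mul_const _) ?_
        exact Filter.Eventually.of_forall fun t => (fderiv ℝ w (t • x)).le_opNorm x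
    _ = ‖x‖ ^ 2 * (∫ t in Ioc (0:ℝ) 1, ‖fderiv ℝ w (t • x)‖) ^ 2 := by
        rw [integral_mul_const]; ring
    _ ≤ ‖x‖ ^ 2 * ∫ t in Ioc (0:ℝ) 1, ‖fderiv ℝ w (t • x)‖ ^ 2 := by
        gcongr
        exact sq_integral_le_integral_sq hL2

end Radial

theorem setIntegral_Ioc_le_mul_of_norm_le {φ : ℝ → ℝ} {a b C : ℝ} (hab : a ≤ b)
    (hφ : ∀ t ∈ Ioc a b, ‖φ t‖ ≤ C) : ∫ t in Ioc a b, φ t ≤ C * (b - a) := by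
  have := norm_setIntegral_le_of_norm_le_const (μ := volume) measure_Ioc_lt_top hφ
  rw [Real.volume_real_Ioc_of_le hab] at this
  exact (le_abs_self _).trans this

theorem smul_mem_ball_zero_of_mem_Icc {E : Type*} [NormedAddCommGroup E] [NormedSpace ℝ E]
    {x : E} {ρ t : ℝ} (ht : t ∈ Icc (0:ℝ) 1) (hx : x ∈ ball 0 ρ) : t • x ∈ ball (0:E) ρ :=
  balanced_ball_zero.smul_mem (by rw [Real.norm_of_nonneg ht.1]; exact ht.2) hx

section Dilation

variable {E : Type*} [NormedAddCommGroup E] [NormedSpace ℝ E] [FiniteDimensional ℝ E]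
  [MeasurableSpace E] [BorelSpace E] (μ : Measure E) [μ.IsAddHaarMeasure]

theorem addHaar_real_ball_of_pos (x : E) {r : ℝ} (hr : 0 < r) :
    μ.real (ball x r) = r ^ finrank ℝ E * μ.real (ball 0 1) := by
  rw [measureReal_def, Measure.addHaar_ball_of_pos μ x hr, ENNReal.toReal_mul,
    ENNReal.toReal_ofReal (by positivity), measureReal_def]

theorem integrable_comp_smul_restrict_ball_prod {g : E → ℝ} {ρ A : ℝ} (hg : Measurable g)
    (hgA : ∀ x ∈ ball 0 ρ, ‖g x‖ ≤ A) :
    Integrable (fun p : E × ℝ => g (p.2 • p.1))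
      ((μ.restrict (ball 0 ρ)).prod (volume.restrict (Ioc 0 1))) := by
  have : IsFiniteMeasure (μ.restrict (ball 0 ρ)) :=
    isFiniteMeasure_restrict.2 measure_ball_lt_top.ne
  have : IsFiniteMeasure (volume.restrict (Ioc (0:ℝ) 1)) := ⟨by simp⟩
  refine (integrable_const A).mono'
    (hg.comp (measurable_snd.smul measurable_fst)).aestronglyMeasurable ?_
  rw [Measure.prod_restrict, ae_restrict_iff' (measurableSet_ball.prod measurableSet_Ioc)]
  exact Filter.Eventually.of_forall fun p hp =>
    hgA _ (smul_mem_ball_zero_of_mem_Icc (Ioc_subset_Icc_self hp.2) hp.1)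

theorem setIntegral_ball_comp_smul_le {g : E → ℝ} {ρ t : ℝ} (hg0 : 0 ≤ g)
    (hg : IntegrableOn g (ball 0 ρ) μ) (ht : t ∈ Ioc (0:ℝ) 1) :
    ∫ x in ball 0 ρ, g (t • x) ∂μ ≤ (t ^ finrank ℝ E)⁻¹ * ∫ x in ball 0 ρ, g x ∂μ := by
  rw [Measure.setIntegral_comp_smul_of_pos μ g _ ht.1, smul_eq_mul]
  refine mul_le_mul_of_nonneg_left
    (setIntegral_mono_set hg (.of_forall hg0) (LE.le.eventuallyLE ?_))
    (inv_nonneg.2 (pow_nonneg ht.1.le _))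
  exact smul_set_subset_iff.2 fun x hx =>
    smul_mem_ball_zero_of_mem_Icc (Ioc_subset_Icc_self ht) hx

theorem setIntegral_ball_integral_comp_smul_le {g : E → ℝ} {ρ A ε : ℝ} (hg : Measurable g)
    (hg0 : 0 ≤ g) (hgA : ∀ x ∈ ball 0 ρ, g x ≤ A) (hε0 : 0 < ε) (hε1 : ε ≤ 1) :
    ∫ x in ball 0 ρ, (∫ t in Ioc (0:ℝ) 1, g (t • x)) ∂μ ≤
      ε * A * μ.real (ball 0 ρ) + (ε ^ finrank ℝ E)⁻¹ * ∫ x in ball 0 ρ, g x ∂μ := by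
  have hgA' : ∀ x ∈ ball 0 ρ, ‖g x‖ ≤ A := fun x hx => by
    rw [Real.norm_of_nonneg (hg0 x)]; exact hgA x hx
  have hint := integrable_comp_smul_restrict_ball_prod μ hg hgA'
  set φ : ℝ → ℝ := fun t => ∫ x in ball 0 ρ, g (t • x) ∂μ
  have hφ0 : ∀ t, 0 ≤ φ t := fun t => setIntegral_nonneg measurableSet_ball fun x _ => hg0 _
  have hφ : IntegrableOn φ (Ioc 0 1) := hint.integral_prod_right
  have hsmall : ∫ t in Ioc 0 ε, φ t ≤ A * μ.real (ball 0 ρ) * ε := by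
    simpa using setIntegral_Ioc_le_mul_of_norm_le hε0.le fun t ht =>
      norm_setIntegral_le_of_norm_le_const measure_ball_lt_top fun x hx =>
        hgA' _ (smul_mem_ball_zero_of_mem_Icc ⟨ht.1.le, ht.2.trans hε1⟩ hx)
  have hlarge : ∫ t in Ioc ε 1, φ t ≤ (ε ^ finrank ℝ E)⁻¹ * ∫ x in ball 0 ρ, g x ∂μ := by
    have hgint : IntegrableOn g (ball 0 ρ) μ :=
      .of_bound measure_ball_lt_top hg.aestronglyMeasurable A
        ((ae_restrict_iff' measurableSet_ball).2 (.of_forall hgA'))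
    have hgint0 : 0 ≤ ∫ x in ball 0 ρ, g x ∂μ :=
      setIntegral_nonneg measurableSet_ball fun x _ => hg0 x
    have hc : 0 ≤ (ε ^ finrank ℝ E)⁻¹ * ∫ x in ball 0 ρ, g x ∂μ := by positivity
    have hφc : ∀ t ∈ Ioc ε 1, ‖φ t‖ ≤ (ε ^ finrank ℝ E)⁻¹ * ∫ x in ball 0 ρ, g x ∂μ := by
      intro t ht
      rw [Real.norm_of_nonneg (hφ0 t)]
      refine (setIntegral_ball_comp_smul_le μ hg0 hgint ⟨hε0.trans ht.1, ht.2⟩).trans ?_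
      gcongr
      exact ht.1.le
    nlinarith [setIntegral_Ioc_le_mul_of_norm_le hε1 hφc, mul_nonneg hc hε0.le]
  rw [integral_integral_swap hint, ← Ioc_union_Ioc_eq_Ioc hε0.le hε1,
    setIntegral_union (Ioc_disjoint_Ioc_of_le le_rfl) measurableSet_Ioc
      (hφ.mono_set (Ioc_subset_Ioc_right hε1)) (hφ.mono_set (Ioc_subset_Ioc_left hε0.le))]
  linarith

theorem setIntegral_norm_sq_le_of_norm_fderiv_le {F : Type*} [NormedAddCommGroup F]
    [NormedSpace ℝ F] [CompleteSpace F] {w : E → F} {ρ M ε : ℝ}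
    (hw : ContDiffOn ℝ 1 w (ball 0 ρ)) (hw0 : w 0 = 0)
    (hM : ∀ x ∈ ball 0 ρ, ‖fderiv ℝ w x‖ ≤ M) (hε0 : 0 < ε) (hε1 : ε ≤ 1) :
    ∫ x in ball 0 ρ, ‖w x‖ ^ 2 ∂μ ≤ ρ ^ 2 * (ε * M ^ 2 * μ.real (ball 0 ρ) +
      (ε ^ finrank ℝ E)⁻¹ * ∫ x in ball 0 ρ, ‖fderiv ℝ w x‖ ^ 2 ∂μ) := by
  set g : E → ℝ := fun x => ‖fderiv ℝ w x‖ ^ 2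
  have hg : Measurable g := (measurable_fderiv ℝ w).norm.pow_const 2
  have hg0 : 0 ≤ g := fun x => by positivity
  have hgM : ∀ x ∈ ball 0 ρ, g x ≤ M ^ 2 := fun x hx =>
    pow_le_pow_left₀ (norm_nonneg _) (hM x hx) 2
  have hradial : ∀ x ∈ ball 0 ρ, ‖w x‖ ^ 2 ≤ ρ ^ 2 * ∫ t in Ioc (0:ℝ) 1, g (t • x) := by
    intro x hx
    have h := norm_sub_sq_le_integral_norm_fderiv_smul_sq hw isOpen_ball fun t ht =>
      smul_mem_ball_zero_of_mem_Icc ht hx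
    rw [hw0, sub_zero] at h
    refine h.trans (mul_le_mul_of_nonneg_right ?_
      (setIntegral_nonneg measurableSet_Ioc fun _ _ => hg0 _))
    exact pow_le_pow_left₀ (norm_nonneg _) (mem_ball_zero_iff.1 hx).le 2
  have hint : Integrable (fun x => ∫ t in Ioc (0:ℝ) 1, g (t • x)) (μ.restrict (ball 0 ρ)) :=
    (integrable_comp_smul_restrict_ball_prod μ hg fun x hx => by
      rw [Real.norm_of_nonneg (hg0 x)]; exact hgM x hx).integral_prod_left
  calc ∫ x in ball 0 ρ, ‖w x‖ ^ 2 ∂μ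
      ≤ ∫ x in ball 0 ρ, ρ ^ 2 * (∫ t in Ioc (0:ℝ) 1, g (t • x)) ∂μ :=
        integral_mono_of_nonneg (.of_forall fun x => by positivity) (hint.const_mul _)
          (ae_restrict_of_forall_mem measurableSet_ball hradial)
    _ = ρ ^ 2 * ∫ x in ball 0 ρ, (∫ t in Ioc (0:ℝ) 1, g (t • x)) ∂μ := integral_const_mul _ _
    _ ≤ _ := by
        gcongr
        exact setIntegral_ball_integral_comp_smul_le μ hg hg0 hgM hε0 hε1

end Dilation

theorem sq_mul_rpow_neg_two_sub_mul_pow {ρ : ℝ} (hρ : 0 < ρ) (n : ℕ) (a : ℝ) :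
    ρ ^ 2 * (ρ ^ (-2 - (n : ℝ)) * a) * ρ ^ n = a := by
  have : ρ ^ 2 * ρ ^ (-2 - (n : ℝ)) * ρ ^ n = 1 := by
    rw [← Real.rpow_natCast, ← Real.rpow_natCast, ← Real.rpow_add hρ, ← Real.rpow_add hρ]
    convert Real.rpow_zero ρ using 2
    push_cast
    ring
  linear_combination a * this

theorem poincare_from_gradient_bound_general (n k : ℕ) (K : ℝ) :
    ∃ C : ℝ, 0 < C ∧
      ∀ (w : EuclideanSpace ℝ (Fin n) → EuclideanSpace ℝ (Fin k)) (ρ₀ : ℝ),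
        0 < ρ₀ → ρ₀ ≤ 1 →
        ContDiffOn ℝ 1 w (ball (0 : EuclideanSpace ℝ (Fin n)) 1) →
        w 0 = 0 →
        (∀ ρ : ℝ, 0 < ρ → ρ < ρ₀ →
          ∀ x ∈ ball (0 : EuclideanSpace ℝ (Fin n)) ρ,
            ‖fderiv ℝ w x‖ ≤
              K * (ρ ^ (-2 - (n : ℝ)) *
                ∫ z in ball (0 : EuclideanSpace ℝ (Fin n)) ρ, ‖w z‖ ^ 2) ^ ((1:ℝ)/2)) →
        ∀ ρ : ℝ, 0 < ρ → ρ < ρ₀ →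
          (∫ z in ball (0 : EuclideanSpace ℝ (Fin n)) ρ, ‖w z‖ ^ 2) ≤
            C * ρ ^ 2 * ∫ z in ball (0 : EuclideanSpace ℝ (Fin n)) ρ, ‖fderiv ℝ w z‖ ^ 2 := by
  set V₁ := volume.real (ball (0 : EuclideanSpace ℝ (Fin n)) 1)
  set ε := (1 + 2 * K ^ 2 * V₁)⁻¹
  have hV₁ : 0 ≤ V₁ := measureReal_nonneg
  have hε0 : 0 < ε := by positivity
  have hε1 : ε ≤ 1 := inv_le_one_of_one_le₀ (by nlinarith)
  have hεK : ε * K ^ 2 * V₁ ≤ 1 / 2 := by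
    rw [mul_assoc, inv_mul_le_iff₀ (by positivity)]
    linarith
  refine ⟨2 * (ε ^ n)⁻¹, by positivity, ?_⟩
  intro w ρ₀ _ hρ₀ hw hw0 hgrad ρ hρ hρρ₀
  set I := ∫ z in ball (0 : EuclideanSpace ℝ (Fin n)) ρ, ‖w z‖ ^ 2
  have hI : 0 ≤ I := setIntegral_nonneg measurableSet_ball fun _ _ => by positivity
  have hM : (K * (ρ ^ (-2 - (n : ℝ)) * I) ^ ((1:ℝ)/2)) ^ 2 =
      K ^ 2 * (ρ ^ (-2 - (n : ℝ)) * I) := by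
    rw [mul_pow, ← Real.sqrt_eq_rpow, Real.sq_sqrt (by positivity)]
  have key := setIntegral_norm_sq_le_of_norm_fderiv_le volume
    (hw.mono (ball_subset_ball (hρρ₀.le.trans hρ₀))) hw0 (hgrad ρ hρ hρρ₀) hε0 hε1
  rw [hM, addHaar_real_ball_of_pos _ _ hρ, finrank_euclideanSpace_fin] at key
  have habsorb : ρ ^ 2 * (ε * (K ^ 2 * (ρ ^ (-2 - (n : ℝ)) * I)) * (ρ ^ n * V₁)) =
      ε * K ^ 2 * V₁ * I := by
    linear_combination (ε * K ^ 2 * V₁) * sq_mul_rpow_neg_two_sub_mul_pow hρ n I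
  nlinarith [mul_le_mul_of_nonneg_right hεK hI]

/-- Poincaré-type inequality 6.5: there is `C = C(n,k,K)` such that any `C¹` map
`w : B₁ → ℝᵏ` with `w(0) = 0` satisfying the Schauder-type gradient bound
`sup_{B_ρ} |Dw| ≤ K (ρ^{-2-n} ∫_{B_ρ} |w|²)^{1/2}` for all `ρ < ρ₀` also satisfies
`∫_{B_ρ} |w|² ≤ C ρ² ∫_{B_ρ} |Dw|²` for all `ρ < ρ₀`. -/
theorem poincare_from_gradient_bound (n k : ℕ) (K : ℝ) (hK : 0 < K) :
    ∃ C : ℝ, 0 < C ∧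
      ∀ (w : EuclideanSpace ℝ (Fin n) → EuclideanSpace ℝ (Fin k)) (ρ₀ : ℝ),
        0 < ρ₀ → ρ₀ ≤ 1 →
        ContDiffOn ℝ 1 w (ball (0 : EuclideanSpace ℝ (Fin n)) 1) →
        w 0 = 0 →
        (∀ ρ : ℝ, 0 < ρ → ρ < ρ₀ →
          ∀ x ∈ ball (0 : EuclideanSpace ℝ (Fin n)) ρ,
            ‖fderiv ℝ w x‖ ≤
              K * (ρ ^ (-2 - (n : ℝ)) *
                ∫ z in ball (0 : EuclideanSpace ℝ (Fin n)) ρ, ‖w z‖ ^ 2) ^ ((1:ℝ)/2)) →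
        ∀ ρ : ℝ, 0 < ρ → ρ < ρ₀ →
          (∫ z in ball (0 : EuclideanSpace ℝ (Fin n)) ρ, ‖w z‖ ^ 2) ≤
            C * ρ ^ 2 * ∫ z in ball (0 : EuclideanSpace ℝ (Fin n)) ρ, ‖fderiv ℝ w z‖ ^ 2 :=
  poincare_from_gradient_bound_general n k K
end
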